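/- Let t ∈ ℝ with t ≠ 0, and let F_t : ℝ² → ℝ be the x₃ = t slice of the three-dimensional elliptic umbilic generating family, F_t(y₁, y₂) = (1/3)y₁³ − y₁y₂² + t y₁². Then the critical locus {(y₁, y₂) ∈ ℝ² : det Hess F_t(y₁, y₂) = 0} is exactly the circle with centre (−t/2, 0) and radius |t|/2, and the caustic of F_t is the image of this circle under the map ∇F_t(y₁, y₂) = (y₁² − y₂² + 2t y₁, −2y₁y₂). -/

import Mathlib

/-- The point of `ℝ²` (with the Euclidean norm) with coordinates `a`, `b`. -/
noncomputable def pt (a b : ℝ) : EuclideanSpace ℝ (Fin 2) :=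
  (WithLp.equiv 2 (Fin 2 → ℝ)).symm ![a, b]

/-- The Hessian matrix of `f : ℝ² → ℝ` at `y`. -/
noncomputable def Hess (f : EuclideanSpace ℝ (Fin 2) → ℝ)
    (y : EuclideanSpace ℝ (Fin 2)) : Matrix (Fin 2) (Fin 2) ℝ :=
  Matrix.of fun i j =>
    fderiv ℝ (fun z => fderiv ℝ f z (EuclideanSpace.single j 1)) y (EuclideanSpace.single i 1)

/-- The `x₃ = t` slice of the three-dimensional elliptic umbilic generating
family. -/
noncomputable def ellipticUmbilicSlice (t : ℝ) : EuclideanSpace ℝ (Fin 2) → ℝ :=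
  fun y => (1 / 3) * (y 0) ^ 3 - (y 0) * (y 1) ^ 2 + t * (y 0) ^ 2

/-- The Lagrangian map associated with the slice `F_t`. -/
noncomputable def ellipticUmbilicSliceMap (t : ℝ) :
    EuclideanSpace ℝ (Fin 2) → EuclideanSpace ℝ (Fin 2) :=
  fun y => pt ((y 0) ^ 2 - (y 1) ^ 2 + 2 * t * (y 0)) (-2 * (y 0) * (y 1))

/-! The Hessian of `F_t` is the Jacobian of `∇F_t`, namely
`[[2y₁ + 2t, −2y₂], [−2y₂, −2y₁]]`, with determinant
`−4 (y₁² + t y₁ + y₂²) = −4 (‖y − (−t/2, 0)‖² − t²/4)`. -/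

open scoped Gradient

section Coordinates

variable {ι : Type*} [Fintype ι]

theorem EuclideanSpace.fderiv_apply_eq_proj (y : EuclideanSpace ℝ ι) (i : ι) :
    fderiv ℝ (fun z : EuclideanSpace ℝ ι => z i) y = EuclideanSpace.proj i :=
  (PiLp.hasFDerivAt_apply 2 y i).fderiv

theorem gradient_apply [DecidableEq ι] (f : EuclideanSpace ℝ ι → ℝ) (y : EuclideanSpace ℝ ι)
    (i : ι) : ∇ f y i = fderiv ℝ f y (EuclideanSpace.single i 1) := by
  rw [← inner_gradient_left, EuclideanSpace.inner_single_right, conj_trivial, one_mul]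

end Coordinates

@[simp]
theorem pt_apply_zero (a b : ℝ) : pt a b 0 = a := rfl

@[simp]
theorem pt_apply_one (a b : ℝ) : pt a b 1 = b := rfl

theorem norm_sub_pt_sq (y : EuclideanSpace ℝ (Fin 2)) (a b : ℝ) :
    ‖y - pt a b‖ ^ 2 = (y 0 - a) ^ 2 + (y 1 - b) ^ 2 := by
  simp [EuclideanSpace.norm_sq_eq, Fin.sum_univ_two]

theorem Hess_apply_eq_fderiv_gradient (f : EuclideanSpace ℝ (Fin 2) → ℝ)
    (y : EuclideanSpace ℝ (Fin 2)) (i j : Fin 2) :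
    Hess f y i j = fderiv ℝ (fun z => ∇ f z j) y (EuclideanSpace.single i 1) := by
  simp only [gradient_apply]
  rfl

section EllipticUmbilic

variable (t : ℝ)

theorem gradient_ellipticUmbilicSlice : ∇ (ellipticUmbilicSlice t) = ellipticUmbilicSliceMap t := by
  ext y i
  rw [gradient_apply]
  unfold ellipticUmbilicSlice
  fin_cases i <;>
    simp (disch := fun_prop) [ellipticUmbilicSliceMap, fderiv_fun_add,
      fderiv_fun_sub, fderiv_fun_mul, fderiv_fun_pow, EuclideanSpace.fderiv_apply_eq_proj] <;>
    ring

theorem Hess_ellipticUmbilicSlice (y : EuclideanSpace ℝ (Fin 2)) :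
    Hess (ellipticUmbilicSlice t) y = !![2 * y 0 + 2 * t, -2 * y 1; -2 * y 1, -2 * y 0] := by
  ext i j
  rw [Hess_apply_eq_fderiv_gradient, gradient_ellipticUmbilicSlice]
  fin_cases i <;> fin_cases j <;>
    simp (disch := fun_prop) [ellipticUmbilicSliceMap, fderiv_fun_add,
      fderiv_fun_sub, fderiv_fun_mul, fderiv_fun_pow, EuclideanSpace.fderiv_apply_eq_proj]
  ring

theorem det_Hess_ellipticUmbilicSlice (y : EuclideanSpace ℝ (Fin 2)) :
    (Hess (ellipticUmbilicSlice t) y).det = -4 * (y 0 ^ 2 + t * y 0 + y 1 ^ 2) := by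
  rw [Hess_ellipticUmbilicSlice, Matrix.det_fin_two_of]
  ring

theorem norm_sub_pt_eq_abs_div_two_iff (y : EuclideanSpace ℝ (Fin 2)) :
    ‖y - pt (-t / 2) 0‖ = |t| / 2 ↔ y 0 ^ 2 + t * y 0 + y 1 ^ 2 = 0 := by
  rw [← sq_eq_sq₀ (norm_nonneg _) (by positivity), norm_sub_pt_sq, div_pow, sq_abs]
  constructor <;> intro h <;> linarith

theorem setOf_det_Hess_ellipticUmbilicSlice_eq_zero :
    {y | (Hess (ellipticUmbilicSlice t) y).det = 0} = {y | ‖y - pt (-t / 2) 0‖ = |t| / 2} := by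
  ext y
  simp only [Set.mem_ofPred_eq, det_Hess_ellipticUmbilicSlice, norm_sub_pt_eq_abs_div_two_iff]
  exact mul_eq_zero_iff_left (by norm_num)

end EllipticUmbilic

theorem ellipticUmbilicSlice_caustic_general (t : ℝ) :
    (∀ y, gradient (ellipticUmbilicSlice t) y = ellipticUmbilicSliceMap t y) ∧
    {y | (Hess (ellipticUmbilicSlice t) y).det = 0} =
      {y | ‖y - pt (-t / 2) 0‖ = |t| / 2} ∧
    ellipticUmbilicSliceMap t '' {y | (Hess (ellipticUmbilicSlice t) y).det = 0} =
      ellipticUmbilicSliceMap t '' {y | ‖y - pt (-t / 2) 0‖ = |t| / 2} := by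
  rw [setOf_det_Hess_ellipticUmbilicSlice_eq_zero]
  exact ⟨congrFun (gradient_ellipticUmbilicSlice t), rfl, rfl⟩

/-- For the slice `F_t(y₁,y₂) = (1/3)y₁³ − y₁y₂² + ty₁²` with `t ≠ 0`: its
Lagrangian map is `∇F_t = (y₁² − y₂² + 2ty₁, −2y₁y₂)`, the critical locus is
exactly the circle with centre `(−t/2, 0)` and radius `|t|/2`, and the caustic is
the image of this circle under `∇F_t`. -/
theorem ellipticUmbilicSlice_caustic (t : ℝ) (ht : t ≠ 0) :
    (∀ y, gradient (ellipticUmbilicSlice t) y = ellipticUmbilicSliceMap t y) ∧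
    {y | (Hess (ellipticUmbilicSlice t) y).det = 0} =
      {y | ‖y - pt (-t / 2) 0‖ = |t| / 2} ∧
    ellipticUmbilicSliceMap t '' {y | (Hess (ellipticUmbilicSlice t) y).det = 0} =
      ellipticUmbilicSliceMap t '' {y | ‖y - pt (-t / 2) 0‖ = |t| / 2} :=
  ellipticUmbilicSlice_caustic_general t
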